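/- arXiv:1902.06902 — 2 statements merged into one kernel-verified Lean document; each statement's English description precedes it below -/
import Mathlib

section
/- Let $P = \mathbb{F}_2[x_1, x_2, \ldots]$ with the derivation $d(x_1)=0$, $d(x_i)=x_1 x_{i-1}^2$ for $i>1$. Then for every $n \geq 1$, the monomial $x_1^n$ is a cycle, and $x_1^n$ is a boundary if and only if $n \geq 3$. -/
open MvPolynomial

/-- `P = 𝔽₂[x₁, x₂, …]`; the variable `X n` represents `x_{n+1}`. -/
abbrev PP : Type := MvPolynomial ℕ (ZMod 2)

/-!
By the Leibniz rule, every boundary lies in the ideal generated by the values `d xᵢ`, hence in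
the monomial ideal spanned by the monomials of degree at least `3`; for `n ≤ 2` the monomial
`x₁ⁿ` is not in that ideal. For `n ≥ 3`, `x₁ⁿ = d (x₁ⁿ⁻³ x₂)`.
-/

namespace MvPolynomial

variable {σ R : Type*} [CommRing R]

theorem derivation_mem_of_forall_X_mem (d : Derivation R (MvPolynomial σ R) (MvPolynomial σ R))
    {I : Ideal (MvPolynomial σ R)} (hX : ∀ i, d (X i) ∈ I) (p : MvPolynomial σ R) :
    d p ∈ I := by
  induction p using MvPolynomial.induction_on with
  | C a => simp [← algebraMap_eq]
  | add p q hp hq => simpa using I.add_mem hp hq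
  | mul_X p i hp =>
    rw [d.leibniz, smul_eq_mul, smul_eq_mul]
    exact I.add_mem (I.mul_mem_left _ (hX i)) (I.mul_mem_left _ hp)

variable (σ R) in
noncomputable def degreeGeIdeal (k : ℕ) : Ideal (MvPolynomial σ R) :=
  Ideal.span ((fun m => monomial m 1) '' {m | k ≤ m.degree})

theorem monomial_mem_degreeGeIdeal {k : ℕ} {m : σ →₀ ℕ} (hm : k ≤ m.degree) :
    monomial m (1 : R) ∈ degreeGeIdeal σ R k :=
  Ideal.subset_span ⟨m, hm, rfl⟩

theorem X_pow_notMem_degreeGeIdeal [Nontrivial R] {k n : ℕ} (hn : n < k) (i : σ) :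
    (X i : MvPolynomial σ R) ^ n ∉ degreeGeIdeal σ R k := by
  rw [degreeGeIdeal, mem_ideal_span_monomial_image, support_X_pow]
  intro h
  obtain ⟨m, hm, hle⟩ := h _ (Finset.mem_singleton_self _)
  have hdeg : m.degree ≤ n := by simpa using Finsupp.degree_mono hle
  exact (hm.trans hdeg).not_gt hn

end MvPolynomial

/-- For every `n ≥ 1`, `x₁ⁿ` is a cycle for Mahowald's differential, and it is a
boundary if and only if `n ≥ 3`. -/
theorem mahowald_x1_pow
    (d : Derivation (ZMod 2) PP PP)
    (h1 : d (X 0) = 0)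
    (hs : ∀ n : ℕ, d (X (n + 1)) = X 0 * (X n) ^ 2) :
    ∀ n : ℕ, 1 ≤ n →
      d ((X 0) ^ n) = 0 ∧ ((∃ z : PP, d z = (X 0) ^ n) ↔ 3 ≤ n) := by
  intro n _
  have hcycle (m : ℕ) : d ((X 0 : PP) ^ m) = 0 := by
    rw [d.leibniz_pow, h1, smul_zero, smul_zero]
  have hgen (i : ℕ) : d (X i) ∈ degreeGeIdeal ℕ (ZMod 2) 3 := by
    cases i with
    | zero => rw [h1]; exact Submodule.zero_mem _
    | succ i =>
      rw [hs, X_pow_eq_monomial, ← pow_one (X 0), X_pow_eq_monomial, monomial_mul, one_mul]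
      apply monomial_mem_degreeGeIdeal
      simp
  refine ⟨hcycle n, fun ⟨z, hz⟩ => ?_, fun h3 => ⟨X 0 ^ (n - 3) * X 1, ?_⟩⟩
  · by_contra h3
    exact X_pow_notMem_degreeGeIdeal (by omega) 0 (hz ▸ derivation_mem_of_forall_X_mem d hgen z)
  · rw [d.leibniz, hcycle, smul_zero, add_zero, smul_eq_mul, hs 0, ← pow_succ', ← pow_add]
    congr 1
    omega
end

section
/- Let $P = \mathbb{F}_2[x_1, x_2, \ldots]$ with derivation $d(x_1)=0$, $d(x_i) = x_1 x_{i-1}^2$ for $i > 1$. Then $\ker d$ is a subring of $P$, $\operatorname{im} d$ is an ideal of $\ker d$, and the homology $H(d) = \ker d/\operatorname{im} d$ is a commutative $\mathbb{F}_2$-algebra containing the classes of $1$, $x_1$, $x_1^2$, $x_2^2$, which are pairwise distinct and nonzero. -/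
/-!
In characteristic `2`, `d ∘ d` is again a derivation; it kills `x₁` and `x₁ x_{i-1}²` (a square
times a cycle), hence every generator, so `d² = 0`. Leibniz makes `ker d` a subring in which
`im d` is an ideal. Every `d xᵢ` is `0` or the cubic monomial `x₁ x_{i-1}²`, so all boundaries
lie in the cube of the ideal `(x₁, x₂, …)`, while `1, x₁, x₁², x₂²` are distinct monomials of
degree `< 3`: neither they nor their pairwise sums are boundaries.
-/

open MvPolynomial

/-- The four homology classes `1, x₁, x₁², x₂²`. -/
noncomputable def fourCycles : Fin 4 → PP := ![1, X 0, (X 0) ^ 2, (X 1) ^ 2]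

namespace Derivation

section CharTwo

variable {R A : Type*} [CommRing R] [CommRing A] [Algebra R A] [CharP A 2]

/-- In characteristic `2` the cross terms `2 • D a * D b` of `D (D (a * b))` vanish. -/
def sqOfCharTwo (D : Derivation R A A) : Derivation R A A where
  toLinearMap := D.toLinearMap ∘ₗ D.toLinearMap
  map_one_eq_zero' := by simp
  leibniz' a b := by
    simp only [LinearMap.coe_comp, coeFn_coe, Function.comp_apply, leibniz, map_add, smul_eq_mul]
    linear_combination (D a * D b) * CharTwo.two_eq_zero (R := A)

@[simp]
lemma sqOfCharTwo_apply (D : Derivation R A A) (a : A) : D.sqOfCharTwo a = D (D a) := rfl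

lemma map_sq_eq_zero_of_charTwo (D : Derivation R A A) (a : A) : D (a ^ 2) = 0 := by
  rw [pow_two, leibniz, smul_eq_mul, CharTwo.add_self_eq_zero]

end CharTwo

variable {σ R A : Type*} [CommSemiring R] [AddCommMonoid A] [Module R A]
  [Module (MvPolynomial σ R) A]

lemma map_mem_of_forall_X_mem {N : Submodule (MvPolynomial σ R) A}
    (D : Derivation R (MvPolynomial σ R) A) (hX : ∀ i, D (X i) ∈ N) (p : MvPolynomial σ R) :
    D p ∈ N := by
  induction p using MvPolynomial.induction_on with
  | C r => simp [derivation_C]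
  | add p q hp hq => simpa using N.add_mem hp hq
  | mul_X p i hp => simpa using N.add_mem (N.smul_mem p (hX i)) (N.smul_mem (X i) hp)

end Derivation

namespace MvPolynomial

variable {σ R : Type*} [CommSemiring R] [Nontrivial R]

lemma monomial_one_add_monomial_one_notMem_pow_idealOfVars {n : ℕ} {a b : σ →₀ ℕ}
    (hab : a ≠ b) (ha : a.degree < n) :
    monomial a (1 : R) + monomial b 1 ∉ idealOfVars σ R ^ n := by
  classical
  rw [mem_pow_idealOfVars_iff']
  intro h
  simpa [coeff_monomial, hab.symm] using h a ha

end MvPolynomial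

open Finsupp in
noncomputable def fourCyclesExponent : Fin 4 → ℕ →₀ ℕ := ![0, single 0 1, single 0 2, single 1 2]

lemma fourCycles_eq_monomial (i : Fin 4) : fourCycles i = monomial (fourCyclesExponent i) 1 := by
  fin_cases i <;> simp [fourCycles, fourCyclesExponent, X, monomial_pow]

lemma fourCyclesExponent_injective : Function.Injective fourCyclesExponent := by
  intro i j h
  fin_cases i <;> fin_cases j <;>
    simp_all [fourCyclesExponent, Finsupp.single_eq_single_iff, Finsupp.single_eq_zero,
      eq_comm (a := (0 : ℕ →₀ ℕ))]

lemma degree_fourCyclesExponent_lt (i : Fin 4) : (fourCyclesExponent i).degree < 3 := by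
  fin_cases i <;> simp [fourCyclesExponent]

lemma X_zero_mul_X_sq_mem_pow_idealOfVars (n : ℕ) :
    (X 0 * X n ^ 2 : PP) ∈ idealOfVars ℕ (ZMod 2) ^ 3 := by
  rw [pow_succ']
  exact Ideal.mul_mem_mul (Ideal.subset_span (Set.mem_range_self 0))
    (Ideal.pow_mem_pow (Ideal.subset_span (Set.mem_range_self n)) 2)

/-- `ker d` is a subring of `P`, `im d` is an ideal of `ker d`, and the classes
of `1, x₁, x₁², x₂²` in the homology `H(d) = ker d / im d` are nonzero and
pairwise distinct (in characteristic 2, distinctness of classes means the sum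
of representatives is not a boundary). -/
theorem mahowald_homology_classes
    (d : Derivation (ZMod 2) PP PP)
    (h1 : d (X 0) = 0)
    (hs : ∀ n : ℕ, d (X (n + 1)) = X 0 * (X n) ^ 2) :
    -- ker d is a subring
    (d 1 = 0 ∧ ∀ a b : PP, d a = 0 → d b = 0 → d (a + b) = 0 ∧ d (a * b) = 0) ∧
    -- im d is an ideal of ker d: it lands in ker d and is stable under
    -- multiplication by elements of ker d
    (∀ a : PP, d (d a) = 0) ∧
    (∀ a c : PP, d c = 0 → ∃ b : PP, c * d a = d b) ∧
    -- the four listed elements are cycles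
    (∀ i : Fin 4, d (fourCycles i) = 0) ∧
    -- their homology classes are nonzero …
    (∀ i : Fin 4, ¬ ∃ z : PP, d z = fourCycles i) ∧
    -- … and pairwise distinct
    (∀ i j : Fin 4, i ≠ j → ¬ ∃ z : PP, d z = fourCycles i + fourCycles j) := by
  have hdd : d.sqOfCharTwo = 0 := by
    refine MvPolynomial.derivation_ext fun i => ?_
    cases i with
    | zero => simp [h1]
    | succ n => simp [hs, d.map_sq_eq_zero_of_charTwo, h1]
  have hboundary (z : PP) : d z ∈ idealOfVars ℕ (ZMod 2) ^ 3 := by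
    refine d.map_mem_of_forall_X_mem (fun i => ?_) z
    cases i with
    | zero => simp [h1]
    | succ n => simpa [hs] using X_zero_mul_X_sq_mem_pow_idealOfVars n
  refine ⟨⟨d.map_one_eq_zero, fun a b ha hb => ⟨by simp [ha, hb], by simp [ha, hb]⟩⟩,
    fun a => by simpa using congr($hdd a), fun a c hc => ⟨c * a, by simp [hc]⟩, ?_, ?_, ?_⟩
  · intro i
    fin_cases i <;> simp [fourCycles, h1, d.map_sq_eq_zero_of_charTwo]
  · rintro i ⟨z, hz⟩
    have hmem := hboundary z
    rw [hz, fourCycles_eq_monomial, monomial_mem_pow_idealOfVars_iff _ _ one_ne_zero] at hmem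
    exact (degree_fourCyclesExponent_lt i).not_ge hmem
  · rintro i j hij ⟨z, hz⟩
    refine monomial_one_add_monomial_one_notMem_pow_idealOfVars (R := ZMod 2)
      (fourCyclesExponent_injective.ne hij) (degree_fourCyclesExponent_lt i) ?_
    rw [← fourCycles_eq_monomial, ← fourCycles_eq_monomial, ← hz]
    exact hboundary z
end
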